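/- For every ε > 0 there exists a bounded linear operator S : Z* → C(Δ)* with ‖S‖ ≤ (1+ε)² and S∘T* = id_{C(Δ)*}, where T* : C(Δ)* → Z* is the adjoint of T. -/

import Mathlib

open MeasureTheory NormedSpace
open scoped ENNReal

/-- The topological dual `E →L[𝕜] 𝕜` of a seminormed space (the former `NormedSpace.Dual`). -/
abbrev NormedSpace.Dual (𝕜 : Type*) (E : Type*) [NontriviallyNormedField 𝕜]
    [SeminormedAddCommGroup E] [NormedSpace 𝕜 E] : Type _ :=
  E →L[𝕜] 𝕜

/-- The adjoint `T* : Y* → X*` of a bounded linear operator `T : X → Y`,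
given by `T* g = g ∘ T`. -/
noncomputable def adjointCLM {X Y : Type*} [NormedAddCommGroup X] [NormedSpace ℝ X]
    [NormedAddCommGroup Y] [NormedSpace ℝ Y] (T : X →L[ℝ] Y) :
    Dual ℝ Y →L[ℝ] Dual ℝ X :=
  (ContinuousLinearMap.compL ℝ X Y ℝ).flip T

/-- The indicator function `g_{n,i} ∈ C(Δ)` of the clopen cylinder
`Δ_{n,i} = {a ∈ {0,1}^ℕ : the first n coordinates of a are the binary digits of i}`. -/
noncomputable def cylinderIndicator (n i : ℕ) : C((ℕ → Bool), ℝ) :=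
  ContinuousMap.comp
    ⟨fun b : Fin n → Bool => if ∀ k : Fin n, b k = i.testBit k then (1 : ℝ) else 0,
      continuous_of_discreteTopology⟩
    ⟨fun a k => a (k : ℕ), by continuity⟩

/-- The unit vector `e_{n,i}` of `Z = (⊕ₙ₌₀^∞ ℓ∞^{2ⁿ})_{ℓ₁}` (for `0 ≤ i < 2ⁿ`). -/
noncomputable def unitVec (n i : ℕ) (h : i < 2 ^ n) : lp (fun n : ℕ => Fin (2 ^ n) → ℝ) 1 :=
  lp.single 1 n (Pi.single (⟨i, h⟩ : Fin (2 ^ n)) 1)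

/-! The operators `R_n : C(Δ) → Z`, `R_n f = ∑ᵢ f(xₙᵢ) eₙᵢ`, sampling `f` at one point `xₙᵢ` of each
cylinder `Δₙᵢ`, have norm at most one, and `T (R_n f) = f ∘ truncₙ` tends to `f` uniformly, where
`truncₙ` resets all coordinates from the `n`-th on to `0`: `truncₙ → id` uniformly on `Δ` and `f` is
uniformly continuous on the compact space `Δ`.

Any family of operators `Rᵢ` of norm `≤ C` with `T ∘ Rᵢ → id` pointwise gives a left inverse of `T*`
of norm `≤ C`: send `φ` to the functional `y ↦ lim_U φ (Rᵢ y)`, the limit along an ultrafilter `U`,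
which exists because these values are bounded. So one even gets `‖S‖ ≤ 1`. -/

open Filter Topology

theorem Ultrafilter.exists_tendsto_of_norm_le {ι E : Type*} [NormedAddCommGroup E] [ProperSpace E]
    (U : Ultrafilter ι) {a : ι → E} {C : ℝ} (h : ∀ i, ‖a i‖ ≤ C) :
    ∃ x, Tendsto a U (𝓝 x) := by
  obtain ⟨x, -, hx⟩ := (isCompact_closedBall (0 : E) C).ultrafilter_le_nhds (U.map a) <|
    le_principal_iff.2 <| mem_map.2 <| univ_mem' fun i => mem_closedBall_zero_iff.2 (h i)
  exact ⟨x, hx⟩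

section DualLimit

variable {ι X Y : Type*} [NormedAddCommGroup X] [NormedSpace ℝ X]
  [NormedAddCommGroup Y] [NormedSpace ℝ Y] {R : ι → Y →L[ℝ] X} {C : ℝ}

theorem norm_dual_apply_le_of_opNorm_le (hR : ∀ i, ‖R i‖ ≤ C) (φ : Dual ℝ X) (y : Y) (i : ι) :
    ‖φ (R i y)‖ ≤ C * ‖φ‖ * ‖y‖ :=
  calc ‖φ (R i y)‖ ≤ ‖φ‖ * (C * ‖y‖) :=
        φ.le_opNorm _ |>.trans <|
          mul_le_mul_of_nonneg_left ((R i).le_of_opNorm_le (hR i) y) (norm_nonneg φ)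
    _ = C * ‖φ‖ * ‖y‖ := by ring

namespace Ultrafilter

variable (U : Ultrafilter ι)

theorem tendsto_limUnder_dual_apply (hR : ∀ i, ‖R i‖ ≤ C) (φ : Dual ℝ X) (y : Y) :
    Tendsto (fun i => φ (R i y)) U (𝓝 (limUnder (U : Filter ι) fun i => φ (R i y))) :=
  tendsto_nhds_limUnder <| U.exists_tendsto_of_norm_le (norm_dual_apply_le_of_opNorm_le hR φ y)

noncomputable def dualLimit (hR : ∀ i, ‖R i‖ ≤ C) : Dual ℝ X →L[ℝ] Dual ℝ Y :=
  LinearMap.mkContinuous₂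
    (LinearMap.mk₂ ℝ (fun φ y => limUnder (U : Filter ι) fun i => φ (R i y))
      (fun φ ψ y => ((U.tendsto_limUnder_dual_apply hR φ y).add
        (U.tendsto_limUnder_dual_apply hR ψ y)).limUnder_eq)
      (fun c φ y => ((U.tendsto_limUnder_dual_apply hR φ y).const_mul c).limUnder_eq)
      (fun φ y z => by
        simpa only [map_add] using ((U.tendsto_limUnder_dual_apply hR φ y).add
          (U.tendsto_limUnder_dual_apply hR φ z)).limUnder_eq)
      (fun c φ y => by
        simpa only [map_smul, smul_eq_mul] using
          ((U.tendsto_limUnder_dual_apply hR φ y).const_mul c).limUnder_eq))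
    C fun φ y =>
      le_of_tendsto' (U.tendsto_limUnder_dual_apply hR φ y).norm
        (norm_dual_apply_le_of_opNorm_le hR φ y)

theorem norm_dualLimit_le (hR : ∀ i, ‖R i‖ ≤ C) : ‖U.dualLimit hR‖ ≤ C :=
  LinearMap.mkContinuous₂_norm_le _
    ((norm_nonneg _).trans (hR (nonempty_of_neBot (U : Filter ι)).some)) _

theorem dualLimit_comp_adjointCLM (hR : ∀ i, ‖R i‖ ≤ C) (T : X →L[ℝ] Y)
    (hTR : ∀ y, Tendsto (fun i => T (R i y)) U (𝓝 y)) :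
    (U.dualLimit hR).comp (adjointCLM T) = ContinuousLinearMap.id ℝ (Dual ℝ Y) := by
  ext ψ y
  exact ((ψ.continuous.tendsto y).comp (hTR y)).limUnder_eq

end Ultrafilter

theorem exists_norm_le_comp_adjointCLM_eq_id {l : Filter ι} [l.NeBot] (T : X →L[ℝ] Y)
    (hR : ∀ i, ‖R i‖ ≤ C) (hTR : ∀ y, Tendsto (fun i => T (R i y)) l (𝓝 y)) :
    ∃ S : Dual ℝ X →L[ℝ] Dual ℝ Y,
      ‖S‖ ≤ C ∧ S.comp (adjointCLM T) = ContinuousLinearMap.id ℝ (Dual ℝ Y) :=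
  ⟨(Ultrafilter.of l).dualLimit hR, (Ultrafilter.of l).norm_dualLimit_le hR,
    (Ultrafilter.of l).dualLimit_comp_adjointCLM hR T fun y =>
      (hTR y).mono_left (Ultrafilter.of_le l)⟩

end DualLimit

namespace Cantor

def binaryDigits (n : ℕ) (i : Fin (2 ^ n)) : Fin n → Bool := fun k => (i : ℕ).testBit k

theorem binaryDigits_bijective (n : ℕ) : Function.Bijective (binaryDigits n) := by
  refine (Fintype.bijective_iff_injective_and_card _).2 ⟨fun i j hij => ?_, by simp⟩
  refine Fin.ext <| Nat.eq_of_testBit_eq fun k => ?_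
  by_cases hk : k < n
  · exact congrFun hij ⟨k, hk⟩
  · have hpow : 2 ^ n ≤ 2 ^ k := Nat.pow_le_pow_right two_pos (not_lt.1 hk)
    rw [Nat.testBit_lt_two_pow (i.2.trans_le hpow), Nat.testBit_lt_two_pow (j.2.trans_le hpow)]

def restrictCoords (n : ℕ) : C(ℕ → Bool, Fin n → Bool) := ⟨fun a k => a k, by fun_prop⟩

def extendByFalse (n : ℕ) (b : Fin n → Bool) : ℕ → Bool :=
  fun k => if h : k < n then b ⟨k, h⟩ else false

def truncation (n : ℕ) : C(ℕ → Bool, ℕ → Bool) :=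
  (⟨extendByFalse n, continuous_of_discreteTopology⟩ : C(Fin n → Bool, ℕ → Bool)).comp
    (restrictCoords n)

theorem tendstoUniformly_truncation : TendstoUniformly (fun n => ⇑(truncation n)) id atTop := by
  rw [tendstoUniformly_iff_tendsto, Pi.uniformity]
  refine tendsto_iInf.2 fun k => tendsto_comap_iff.2 fun s hs =>
    mem_map.2 <| mem_of_superset (prod_mem_prod (eventually_gt_atTop k) univ_mem) fun q hq => ?_
  have hkq : k < q.1 := hq.1
  simpa [truncation, extendByFalse, restrictCoords, hkq] using refl_mem_uniformity hs

theorem tendsto_comp_truncation {β : Type*} [UniformSpace β] (f : C(ℕ → Bool, β)) :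
    Tendsto (fun n => f.comp (truncation n)) atTop (𝓝 f) :=
  ContinuousMap.tendsto_iff_tendstoUniformly.2 <|
    (CompactSpace.uniformContinuous_of_continuous f.continuous).comp_tendstoUniformly
      tendstoUniformly_truncation

noncomputable def cylinderSample (n : ℕ) : C(ℕ → Bool, ℝ) →L[ℝ] (Fin (2 ^ n) → ℝ) :=
  ContinuousLinearMap.pi fun i => ContinuousMap.evalCLM ℝ (extendByFalse n (binaryDigits n i))

theorem norm_cylinderSample_le (n : ℕ) : ‖cylinderSample n‖ ≤ 1 :=
  ContinuousLinearMap.opNorm_le_bound _ zero_le_one fun f => by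
    rw [one_mul]
    exact (pi_norm_le_iff_of_nonneg (norm_nonneg f)).2 fun i => f.norm_coe_le_norm _

theorem cylinderIndicator_apply (n : ℕ) (i : Fin (2 ^ n)) (x : ℕ → Bool) :
    cylinderIndicator n i x = if binaryDigits n i = restrictCoords n x then 1 else 0 := by
  simp [cylinderIndicator, binaryDigits, restrictCoords, funext_iff, eq_comm]

theorem sum_cylinderSample_smul_cylinderIndicator (n : ℕ) (f : C(ℕ → Bool, ℝ)) :
    ∑ i : Fin (2 ^ n), cylinderSample n f i • cylinderIndicator n i = f.comp (truncation n) := by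
  ext x
  obtain ⟨i₀, hi₀⟩ := (binaryDigits_bijective n).2 (restrictCoords n x)
  simp [cylinderIndicator_apply, ← hi₀, (binaryDigits_bijective n).1.eq_iff, cylinderSample,
    truncation]

theorem lp_single_eq_sum_smul_unitVec (n : ℕ) (v : Fin (2 ^ n) → ℝ) :
    lp.single 1 n v = ∑ i : Fin (2 ^ n), v i • unitVec n i i.2 := by
  conv_lhs => rw [← Finset.univ_sum_single v]
  simp only [unitVec, ← lp.single_smul, ← Pi.single_smul, smul_eq_mul, mul_one]
  exact map_sum (lp.singleAddMonoidHom 1 n) _ _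

noncomputable def cylinderApprox (n : ℕ) :
    C(ℕ → Bool, ℝ) →L[ℝ] lp (fun n : ℕ => Fin (2 ^ n) → ℝ) 1 :=
  (lp.singleContinuousLinearMap ℝ (fun n : ℕ => Fin (2 ^ n) → ℝ) 1 n).comp (cylinderSample n)

theorem norm_cylinderApprox_le (n : ℕ) : ‖cylinderApprox n‖ ≤ 1 :=
  calc ‖cylinderApprox n‖ ≤ 1 * 1 :=
        ContinuousLinearMap.opNorm_comp_le _ _ |>.trans <| mul_le_mul
          (ContinuousLinearMap.opNorm_le_bound _ zero_le_one fun v => by simp)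
          (norm_cylinderSample_le n) (norm_nonneg _) zero_le_one
    _ = 1 := one_mul 1

theorem apply_cylinderApprox {T : lp (fun n : ℕ => Fin (2 ^ n) → ℝ) 1 →L[ℝ] C(ℕ → Bool, ℝ)}
    (hT : ∀ (n i : ℕ) (h : i < 2 ^ n), T (unitVec n i h) = cylinderIndicator n i)
    (n : ℕ) (f : C(ℕ → Bool, ℝ)) : T (cylinderApprox n f) = f.comp (truncation n) := by
  rw [← sum_cylinderSample_smul_cylinderIndicator, cylinderApprox,
    ContinuousLinearMap.comp_apply, lp.singleContinuousLinearMap_apply,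
    lp_single_eq_sum_smul_unitVec, map_sum]
  simp only [map_smul, hT]

end Cantor

/-- Let `T : Z → C(Δ)` be the bounded linear operator determined by
`T e_{n,i} = g_{n,i}`. For every `ε > 0` there is a bounded linear operator
`S : Z* → C(Δ)*` with `‖S‖ ≤ (1+ε)²` and `S ∘ T* = id_{C(Δ)*}`. -/
theorem stmt15 (T : lp (fun n : ℕ => Fin (2 ^ n) → ℝ) 1 →L[ℝ] C((ℕ → Bool), ℝ))
    (hT : ∀ (n i : ℕ) (h : i < 2 ^ n), T (unitVec n i h) = cylinderIndicator n i)
    (ε : ℝ) (hε : 0 < ε) :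
    ∃ S : Dual ℝ (lp (fun n : ℕ => Fin (2 ^ n) → ℝ) 1) →L[ℝ] Dual ℝ C((ℕ → Bool), ℝ),
      ‖S‖ ≤ (1 + ε) ^ 2 ∧
      S.comp (adjointCLM T) = ContinuousLinearMap.id ℝ (Dual ℝ C((ℕ → Bool), ℝ)) := by
  obtain ⟨S, hS, hST⟩ := exists_norm_le_comp_adjointCLM_eq_id (l := atTop) T
    Cantor.norm_cylinderApprox_le fun f => by
      simpa only [Cantor.apply_cylinderApprox hT] using Cantor.tendsto_comp_truncation f
  have hC : (1 : ℝ) ≤ (1 + ε) ^ 2 := by nlinarith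
  exact ⟨S, hS.trans hC, hST⟩
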